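/- Over K = F_9 with σ(x) = x^3 (so n = 2, K_0 = F_3) and m = 4, the norm map N_4^σ(x) = x^{40} is trivial on K^× (i.e., N_4^σ(α) = 1 for all α ∈ K^×). Consequently, for a primitive element ξ of F_9 and b = ξ^k with 2 ≤ k < 8, gcd(k, 8) = 1, and k not a power of 3 modulo 8, there is no Hamming-weight preserving isomorphism between K[t;σ]/K[t;σ](t^4 − ξ) and K[t;σ]/K[t;σ](t^4 − ξ^k), even though ⟨ξ, N_4^σ(K^×)⟩ = K^× = ⟨ξ^k, N_4^σ(K^×)⟩. -/
import Mathlib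


open Finset

noncomputable section

namespace PetitFormal

variable {S : Type*}

/-- Partial norm `N_i^τ(β) = ∏_{j=0}^{i-1} τ^j(β)`. -/
def pnorm [CommRing S] (τ : RingAut S) (i : ℕ) (β : S) : S :=
  ∏ j ∈ Finset.range i, (τ ^ j) β

/-- Multiplication in the skew polynomial ring `S[t;σ]`, with `t·a = σ(a)·t`,
modelled on finitely supported functions `ℕ →₀ S`. -/
def skewMul [CommRing S] (σ : RingAut S) (x y : ℕ →₀ S) : ℕ →₀ S :=
  x.sum fun i c => y.sum fun j d => Finsupp.single (i + j) (c * (σ ^ i) d)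

/-- Embedding of degree `< m` polynomials into `ℕ →₀ S`. -/
def toPoly [CommRing S] {m : ℕ} (x : Fin m → S) : ℕ →₀ S :=
  ∑ i : Fin m, Finsupp.single (i : ℕ) (x i)

/-- One pass of right division by the monic polynomial `f = t^m - f0(t)`:
`reduceAux σ m f0 K` reduces a skew polynomial supported in `[0, m+K)`
to one supported in `[0, m)`, using `t^{m+j} ≡ ∑_i σ^j(f0 i) t^{j+i}` (mod_r f). -/
def reduceAux [CommRing S] (σ : RingAut S) (m : ℕ) (f0 : Fin m → S) :
    ℕ → (ℕ →₀ S) → (ℕ →₀ S)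
  | 0, x => x
  | K + 1, x =>
      reduceAux σ m f0 K
        (x - Finsupp.single (m + K) (x (m + K))
          + ∑ j : Fin m, Finsupp.single (K + (j : ℕ)) (x (m + K) * (σ ^ K) (f0 j)))

/-- Multiplication in the (generally nonassociative) Petit algebra
`S_f = S[t;σ]/S[t;σ](t^m - f0(t))`: multiply in `S[t;σ]` and reduce by right
division by `f = t^m - f0(t)`. -/
def petitMul [CommRing S] (σ : RingAut S) (m : ℕ) (f0 : Fin m → S)
    (x y : Fin m → S) : Fin m → S :=
  fun d => (reduceAux σ m f0 m (skewMul σ (toPoly x) (toPoly y))) (d : ℕ)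

/-- The coefficient vector of the constant `a`, so that `t^m - f0 = t^m - a`. -/
def constF [CommRing S] (m : ℕ) (a : S) : Fin m → S :=
  fun i => if (i : ℕ) = 0 then a else 0

/-- Multiplication in the Petit algebra `S_a = S[t;σ]/S[t;σ](t^m - a)`. -/
def petitMulC [CommRing S] (σ : RingAut S) (m : ℕ) (a : S) :
    (Fin m → S) → (Fin m → S) → (Fin m → S) :=
  petitMul σ m (constF m a)

/-- The monomial `c t^k` as an element of the Petit algebra (zero if `k ≥ m`). -/
def mono [CommRing S] (m : ℕ) (c : S) (k : ℕ) : Fin m → S :=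
  fun i => if (i : ℕ) = k then c else 0

/-- The identity `1 = 1·t^0` of the Petit algebra. -/
def pone [CommRing S] (m : ℕ) : Fin m → S := mono m 1 0

/-- Left-nested power `L(z,s) = z(z(⋯(z)))` (`s` factors) in the Petit algebra. -/
def lpow [CommRing S] (σ : RingAut S) (m : ℕ) (f0 : Fin m → S) (z : Fin m → S) :
    ℕ → Fin m → S
  | 0 => pone m
  | s + 1 => petitMul σ m f0 z (lpow σ m f0 z s)

/-- `G` is a (unital) ring homomorphism from the Petit algebra `S_f` to `S_g`. -/
def IsPetitHom [CommRing S] (σ : RingAut S) (m : ℕ) (f0 g0 : Fin m → S)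
    (G : (Fin m → S) → (Fin m → S)) : Prop :=
  (∀ x y, G (x + y) = G x + G y) ∧
  (∀ x y, G (petitMul σ m f0 x y) = petitMul σ m g0 (G x) (G y)) ∧
  G (pone m) = pone m

/-- `G` is a (unital) ring endomorphism of the skew polynomial ring `S[t;σ]`. -/
def IsSkewHom [CommRing S] (σ : RingAut S) (G : (ℕ →₀ S) → (ℕ →₀ S)) : Prop :=
  (∀ x y, G (x + y) = G x + G y) ∧
  (∀ x y, G (skewMul σ x y) = skewMul σ (G x) (G y)) ∧
  G (Finsupp.single 0 1) = Finsupp.single 0 1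

/-- `G` is a (unital) ring homomorphism from `S[t;σ]` to the Petit algebra `S_g`. -/
def IsSkewToPetitHom [CommRing S] (σ : RingAut S) (m : ℕ) (g0 : Fin m → S)
    (G : (ℕ →₀ S) → (Fin m → S)) : Prop :=
  (∀ x y, G (x + y) = G x + G y) ∧
  (∀ x y, G (skewMul σ x y) = petitMul σ m g0 (G x) (G y)) ∧
  G (Finsupp.single 0 1) = pone m

/-- The monomial map `G_{τ,α,k}` on `S[t;σ]`:
`∑ a_i t^i ↦ ∑ τ(a_i) (α t^k)^i = ∑ τ(a_i) N_i^{σ^k}(α) t^{ik}`. -/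
def skewMonomialMap [CommRing S] (σ τ : RingAut S) (α : S) (k : ℕ)
    (x : ℕ →₀ S) : ℕ →₀ S :=
  x.sum fun i c => Finsupp.single (i * k) (τ c * pnorm (σ ^ k) i α)

/-- The monomial map `G_{τ,α,k}` from `S[t;σ]` into the Petit algebra `S_g`:
`∑ a_i t^i ↦ ∑ τ(a_i) (α t^k)^i`, powers computed by left nesting. -/
def skewToPetitMonomialMap [CommRing S] (σ τ : RingAut S) (m : ℕ)
    (g0 : Fin m → S) (α : S) (k : ℕ) (x : ℕ →₀ S) : Fin m → S :=
  x.sum fun i c => τ c • lpow σ m g0 (mono m α k) i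

/-- The monomial map `G_{τ,α,k}` between Petit algebras of degree `m`:
`∑_{i<m} a_i t^i ↦ ∑_{i<m} τ(a_i) (α t^k)^i`, powers computed by left nesting
in the codomain `S_g`. -/
def petitMonomialMap [CommRing S] (σ τ : RingAut S) (m : ℕ)
    (g0 : Fin m → S) (α : S) (k : ℕ) (x : Fin m → S) : Fin m → S :=
  ∑ i : Fin m, τ (x i) • lpow σ m g0 (mono m α k) (i : ℕ)

/-- The Hamming weight: the number of nonzero coefficients. -/
def hwt [CommRing S] {m : ℕ} (x : Fin m → S) : ℕ := by
  classical exact (Finset.univ.filter fun i => x i ≠ 0).card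

end PetitFormal

open PetitFormal
section Aux

variable {K : Type*} [Field K]

lemma finv0 : ((0:Fin 4):ℕ) = 0 := rfl
lemma finv1 : ((1:Fin 4):ℕ) = 1 := rfl
lemma finv2 : ((2:Fin 4):ℕ) = 2 := rfl
lemma finv3 : ((3:Fin 4):ℕ) = 3 := rfl

lemma toPoly_mono (c : K) (n : ℕ) (hn : n < 4) :
    toPoly (mono 4 c n) = Finsupp.single n c := by
  unfold toPoly mono
  rw [Fin.sum_univ_four]
  interval_cases n <;> simp [finv0, finv1, finv2, finv3]

lemma skewMul_single (σ : RingAut K) (i j : ℕ) (c d : K) :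
    skewMul σ (Finsupp.single i c) (Finsupp.single j d)
      = Finsupp.single (i + j) (c * (σ ^ i) d) := by
  unfold skewMul
  rw [Finsupp.sum_single_index, Finsupp.sum_single_index]
  · simp
  · simp [Finsupp.sum_single_index]

set_option maxRecDepth 10000 in
lemma petit_mono (σ : RingAut K) (b c d : K) (i j : ℕ) (hi : i < 4) (hj : j < 4) :
    petitMul σ 4 (constF 4 b) (mono 4 c i) (mono 4 d j)
      = if i + j < 4 then mono 4 (c * (σ ^ i) d) (i + j)
        else mono 4 (c * (σ ^ i) d * (σ ^ (i + j - 4)) b) (i + j - 4) := by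
  unfold petitMul
  rw [toPoly_mono _ _ hi, toPoly_mono _ _ hj, skewMul_single]
  set e := c * (σ ^ i) d with he
  have hred : ∀ (n : ℕ), n < 8 →
      reduceAux σ 4 (constF 4 b) 4 (Finsupp.single n e)
        = if n < 4 then Finsupp.single n e
          else Finsupp.single (n - 4) (e * (σ ^ (n - 4)) b) := by
    intro n hn
    unfold reduceAux reduceAux reduceAux reduceAux reduceAux
    interval_cases n <;>
      simp [constF, Fin.sum_univ_four, finv0, finv1, finv2, finv3,
        Finsupp.single_apply, sub_self]
  funext dd
  rw [hred (i + j) (by omega)]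
  by_cases h : i + j < 4 <;>
    simp only [h, if_pos, if_neg, if_true, if_false, mono, Finsupp.single_apply] <;>
    split_ifs with h1 h2 <;> first | rfl | omega

end Aux
section Aux2

variable {K : Type*} [Field K]

lemma fin_val_mk {n : ℕ} (a : ℕ) (h : a < n) : ((⟨a, h⟩ : Fin n) : ℕ) = a := rfl

lemma ringaut_one_apply (x : K) : (1 : RingAut K) x = x := rfl

lemma hwt_mono (c : K) (hc : c ≠ 0) (n : ℕ) (hn : n < 4) : hwt (mono 4 c n) = 1 := by
  classical
  unfold hwt mono
  rw [Finset.card_eq_one]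
  refine ⟨⟨n, hn⟩, ?_⟩
  ext i
  simp only [Finset.mem_filter, Finset.mem_univ, true_and, Finset.mem_singleton, ne_eq,
    ite_eq_right_iff, not_forall]
  constructor
  · rintro ⟨h, -⟩; exact Fin.ext h
  · rintro rfl; exact ⟨rfl, hc⟩

lemma mono_of_hwt (x : Fin 4 → K) (h : hwt x = 1) :
    ∃ j : Fin 4, x j ≠ 0 ∧ x = mono 4 (x j) (j : ℕ) := by
  classical
  unfold hwt at h
  rw [Finset.card_eq_one] at h
  obtain ⟨j, hj⟩ := h
  have hmem : ∀ i : Fin 4, x i ≠ 0 ↔ i = j := by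
    intro i
    rw [← Finset.mem_singleton, ← hj]
    simp
  refine ⟨j, (hmem j).2 rfl, ?_⟩
  funext i
  by_cases hij : i = j
  · subst hij; simp [mono]
  · have hx : x i = 0 := by
      by_contra hne; exact hij ((hmem i).1 hne)
    rw [hx]
    unfold mono
    rw [if_neg fun hv => hij (Fin.ext hv)]

lemma sigma_pow (σ : RingAut K) (hσ : ∀ x : K, σ x = x ^ 3) :
    ∀ (i : ℕ) (x : K), (σ ^ i) x = x ^ 3 ^ i := by
  intro i
  induction i with
  | zero => intro x; rw [pow_zero, pow_zero, pow_one]; rfl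
  | succ n ih =>
      intro x
      rw [pow_succ σ n]
      show (σ ^ n) (σ x) = _
      rw [ih (σ x), hσ, ← pow_mul, pow_succ, mul_comm]

lemma quad_roots {A B r s t : K} (hrs : r ≠ s) (hr : r ^ 2 = A + B * r)
    (hs : s ^ 2 = A + B * s) (ht : t ^ 2 = A + B * t) : t = r ∨ t = s := by
  have h1 : (r - s) * (r + s - B) = 0 := by linear_combination hr - hs
  have h2 : r + s - B = 0 := by
    rcases mul_eq_zero.1 h1 with h | h
    · exact absurd (sub_eq_zero.1 h) hrs
    · exact h
  have hB : B = r + s := by linear_combination -h2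
  have hA : A = -(r * s) := by linear_combination -hr - r * hB
  have h3 : (t - r) * (t - s) = 0 := by linear_combination ht + hA + t * hB
  rcases mul_eq_zero.1 h3 with h | h
  · exact Or.inl (sub_eq_zero.1 h)
  · exact Or.inr (sub_eq_zero.1 h)

/-- Every ring automorphism of a field with 9 elements sends a generator `ξ`
of the unit group to `ξ` or `ξ^3`. -/
lemma aut_dichotomy [Fintype K] (hK : Fintype.card K = 9)
    (σ : RingAut K) (hσ : ∀ x : K, σ x = x ^ 3)
    (ξ : Kˣ) (hord : orderOf ξ = 8) (τ : RingAut K) :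
    τ (ξ : K) = (ξ : K) ∨ τ (ξ : K) = (ξ : K) ^ 3 := by
  haveI : Fact (Nat.Prime 3) := ⟨by norm_num⟩
  obtain ⟨n, hp, hc⟩ := FiniteField.card K (ringChar K)
  have hdvd : ringChar K ∣ 3 ^ 2 := by
    have : ringChar K ∣ Fintype.card K := hc ▸ dvd_pow_self _ (by positivity)
    rwa [hK, show (9 : ℕ) = 3 ^ 2 by norm_num] at this
  have hp3 : ringChar K = 3 :=
    (Nat.prime_dvd_prime_iff_eq hp (by norm_num)).1 (hp.dvd_of_dvd_pow hdvd)
  haveI : CharP K 3 := by rw [← hp3]; exact ringChar.charP K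
  set φ : ZMod 3 →+* K := ZMod.castHom (dvd_refl 3) K with hφ
  have hfix : ∀ (ρ : RingAut K) (a : ZMod 3), ρ (φ a) = φ a := by
    intro ρ a
    have : (ρ : K →+* K).comp φ = φ := RingHom.ext_zmod _ _
    exact RingHom.congr_fun this a
  have hpowne : (ξ : K) ≠ (ξ : K) ^ 3 := by
    intro h
    have h' : ξ ^ 1 = ξ ^ 3 := Units.ext (by rw [Units.val_pow_eq_pow_val, pow_one]; exact h)
    have := pow_eq_pow_iff_modEq.mp h'
    rw [hord] at this
    exact absurd this (by decide)
  have hc3 : ∀ c : ZMod 3, c ^ (3 : ℕ) = c := by intro c; fin_cases c <;> rfl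
  have hnotin : ∀ c : ZMod 3, (ξ : K) ≠ φ c := by
    intro c h
    apply hpowne
    rw [h, ← map_pow, hc3 c]
  have hsurj : Function.Surjective (fun p : ZMod 3 × ZMod 3 => φ p.1 + φ p.2 * (ξ : K)) := by
    have hinj : Function.Injective (fun p : ZMod 3 × ZMod 3 => φ p.1 + φ p.2 * (ξ : K)) := by
      rintro ⟨a, b⟩ ⟨a', b'⟩ h
      simp only at h
      by_cases hb : b = b'
      · subst hb
        have : φ a = φ a' := by linear_combination h
        have := φ.injective this
        simp [this]
      · exfalso
        have hne : φ (b - b') ≠ 0 := fun h0 => hb (sub_eq_zero.1 (φ.injective (by rwa [map_zero])))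
        apply hnotin ((a' - a) / (b - b'))
        rw [map_div₀]
        rw [eq_div_iff hne]
        push_cast [map_sub]
        linear_combination h
    have hbij := (Fintype.bijective_iff_injective_and_card _).2 ⟨hinj, by simp [hK]⟩
    exact hbij.surjective
  obtain ⟨⟨a, b⟩, hab⟩ := hsurj ((ξ : K) ^ 2)
  simp only at hab
  have hr : (ξ : K) ^ 2 = φ a + φ b * (ξ : K) := hab.symm
  have hs : ((ξ : K) ^ 3) ^ 2 = φ a + φ b * ((ξ : K) ^ 3) := by
    have := congrArg σ hr
    rw [map_pow, map_add, map_mul, hfix σ, hfix σ, hσ] at this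
    exact this
  have ht : (τ (ξ : K)) ^ 2 = φ a + φ b * τ (ξ : K) := by
    have := congrArg τ hr
    rw [map_pow, map_add, map_mul, hfix τ, hfix τ] at this
    exact this
  exact quad_roots hpowne hr hs ht

end Aux2
set_option maxHeartbeats 1000000 in

/-- Example `Eg:1`: over `K = F_9` with `σ(x) = x^3` and `m = 4`, the norm
`N_4^σ(x) = x^{40}` is trivial on `K^×`; and for a primitive element `ξ` and
`2 ≤ k < 8` with `gcd(k,8) = 1` and `k` not a power of `3` mod `8`, there is
no Hamming-weight preserving isomorphism between `K[t;σ]/(t^4−ξ)` and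
`K[t;σ]/(t^4−ξ^k)` (with scalar restriction an automorphism commuting with
`σ`), even though `⟨ξ, N_4^σ(K^×)⟩ = K^× = ⟨ξ^k, N_4^σ(K^×)⟩`. -/
theorem stmt18 (K : Type*) [Field K] [Fintype K] (hK : Fintype.card K = 9)
    (σ : RingAut K) (hσ : ∀ x : K, σ x = x ^ 3)
    (ξ : Kˣ) (hξ : ∀ x : Kˣ, x ∈ Subgroup.zpowers ξ)
    (k : ℕ) (hk2 : 2 ≤ k) (hk8 : k < 8) (hkgcd : Nat.gcd k 8 = 1)
    (hknot3 : ∀ l : ℕ, ¬ k ≡ 3 ^ l [MOD 8]) :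
    (∀ α : Kˣ, α ^ 40 = 1) ∧
    Subgroup.closure ({ξ} ∪ {u : Kˣ | ∃ α : Kˣ, (u : K) = pnorm σ 4 (α : K)}) = ⊤ ∧
    Subgroup.closure ({ξ ^ k} ∪ {u : Kˣ | ∃ α : Kˣ, (u : K) = pnorm σ 4 (α : K)}) = ⊤ ∧
    ¬ ∃ (G : (Fin 4 → K) → (Fin 4 → K)) (τ : RingAut K),
        (∀ x, τ (σ x) = σ (τ x)) ∧
        IsPetitHom σ 4 (constF 4 ((ξ : K))) (constF 4 (((ξ ^ k : Kˣ) : K))) G ∧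
        Function.Bijective G ∧
        (∀ c : K, G (mono 4 c 0) = mono 4 (τ c) 0) ∧
        (∀ x, hwt (G x) = hwt x) := by
  haveI : DecidableEq K := Classical.decEq K
  have hcardU : Fintype.card Kˣ = 8 := by rw [Fintype.card_units, hK]
  have hord : orderOf ξ = 8 := by
    rw [orderOf_eq_card_of_forall_mem_zpowers hξ, Nat.card_eq_fintype_card, hcardU]
  refine ⟨?_, ?_, ?_, ?_⟩
  · intro α
    have h8 : α ^ 8 = 1 := by rw [← hcardU]; exact pow_card_eq_one
    calc α ^ 40 = (α ^ 8) ^ 5 := by rw [← pow_mul]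
    _ = 1 := by rw [h8, one_pow]
  · rw [eq_top_iff]
    intro x _
    have hzle : Subgroup.zpowers ξ ≤ Subgroup.closure
        ({ξ} ∪ {u : Kˣ | ∃ α : Kˣ, (u : K) = pnorm σ 4 (α : K)}) :=
      Subgroup.zpowers_le.2 (Subgroup.subset_closure (Set.mem_union_left _ rfl))
    exact hzle (hξ x)
  · have hokd : orderOf (ξ ^ k) = 8 := by
      rw [orderOf_pow, hord, Nat.gcd_comm, hkgcd, Nat.div_one]
    have hztop : Subgroup.zpowers (ξ ^ k) = ⊤ := by
      apply Subgroup.eq_top_of_card_eq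
      rw [Nat.card_zpowers, hokd, Nat.card_eq_fintype_card, hcardU]
    rw [eq_top_iff, ← hztop]
    exact Subgroup.zpowers_le.2 (Subgroup.subset_closure (Set.mem_union_left _ rfl))
  · rintro ⟨G, τ, hcomm, ⟨hadd, hmul, hone⟩, ⟨hinjG, hsurjG⟩, hconst, hwtG⟩
    set ξK : K := (ξ : K) with hξKdef
    set bK : K := ((ξ ^ k : Kˣ) : K) with hbKdef
    have hbKpow : bK = ξK ^ k := Units.val_pow_eq_pow_val ξ k
    have hq : ∀ x : K, x ≠ 0 → x ^ 8 = 1 := by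
      intro x hx
      have := FiniteField.pow_card_sub_one_eq_one x hx
      rwa [hK] at this
    have hsp := sigma_pow σ hσ
    have hmod : ∀ a c : ℕ, ξK ^ a = ξK ^ c → a ≡ c [MOD 8] := by
      intro a c h
      have h' : ξ ^ a = ξ ^ c := Units.ext
        (by rw [Units.val_pow_eq_pow_val, Units.val_pow_eq_pow_val]; exact h)
      have := pow_eq_pow_iff_modEq.mp h'
      rwa [hord] at this
    -- products of powers of t in the domain algebra
    have ht2 : petitMul σ 4 (constF 4 ξK) (mono 4 (1:K) 1) (mono 4 (1:K) 1)
        = mono 4 (1:K) 2 := by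
      rw [petit_mono σ ξK 1 1 1 1 (by norm_num) (by norm_num)]; norm_num
    have ht3 : petitMul σ 4 (constF 4 ξK) (mono 4 (1:K) 1) (mono 4 (1:K) 2)
        = mono 4 (1:K) 3 := by
      rw [petit_mono σ ξK 1 1 1 2 (by norm_num) (by norm_num)]; norm_num
    have ht4 : petitMul σ 4 (constF 4 ξK) (mono 4 (1:K) 1) (mono 4 (1:K) 3)
        = mono 4 ξK 0 := by
      rw [petit_mono σ ξK 1 1 1 3 (by norm_num) (by norm_num)]
      norm_num [hsp, map_one, ringaut_one_apply]
    -- G t is a monomial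
    have h1 : hwt (G (mono 4 (1:K) 1)) = 1 := by
      rw [hwtG, hwt_mono 1 one_ne_zero 1 (by norm_num)]
    obtain ⟨j, hα, hGt⟩ := mono_of_hwt _ h1
    obtain ⟨jn, hjn⟩ := j
    rw [fin_val_mk] at hGt
    generalize hαdef : G (mono 4 (1:K) 1) ⟨jn, hjn⟩ = α at hα hGt
    have hg2 : G (mono 4 (1:K) 2)
        = petitMul σ 4 (constF 4 bK) (mono 4 α jn) (mono 4 α jn) := by
      rw [← ht2, hmul, hGt]
    interval_cases jn
    · -- degree 0 : contradicts injectivity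
      have hGc : G (mono 4 (τ.symm α) 0) = mono 4 α 0 := by
        rw [hconst, RingEquiv.apply_symm_apply]
      have heq : mono 4 (1:K) 1 = mono 4 (τ.symm α) 0 := hinjG (by rw [hGt, hGc])
      simpa [mono, finv1] using congrFun heq 1
    · -- degree 1
      have e2 : G (mono 4 (1:K) 2) = mono 4 (α * (σ ^ 1) α) 2 := by
        rw [hg2, petit_mono σ bK α α 1 1 (by norm_num) (by norm_num)]; norm_num
      have e3 : G (mono 4 (1:K) 3) = mono 4 (α * (σ ^ 1) (α * (σ ^ 1) α)) 3 := by
        have h := hmul (mono 4 (1:K) 1) (mono 4 (1:K) 2)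
        rw [ht3, hGt, e2, petit_mono σ bK α _ 1 2 (by norm_num) (by norm_num)] at h
        rw [h]; norm_num [ringaut_one_apply]
      have e4 : mono 4 (τ ξK) 0
          = mono 4 (α * (σ ^ 1) (α * (σ ^ 1) (α * (σ ^ 1) α)) * (σ ^ 0) bK) 0 := by
        have h := hmul (mono 4 (1:K) 1) (mono 4 (1:K) 3)
        rw [ht4, hconst, hGt, e3, petit_mono σ bK α _ 1 3 (by norm_num) (by norm_num)] at h
        rw [h]; norm_num [ringaut_one_apply]
      have hcoef : τ ξK = α * (σ ^ 1) (α * (σ ^ 1) (α * (σ ^ 1) α)) * (σ ^ 0) bK := by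
        simpa [mono, finv0] using congrFun e4 0
      have hτ : τ ξK = (α ^ 8) ^ 5 * bK := by
        rw [hcoef]; simp only [hsp]; ring
      rw [hq α hα, one_pow, one_mul] at hτ
      rcases aut_dichotomy hK σ hσ ξ hord τ with hd | hd
      · have hm := hmod k 1 (by rw [← hbKpow, ← hτ, hd, pow_one])
        exact hknot3 0 hm
      · have hm := hmod k 3 (by rw [← hbKpow, ← hτ, hd])
        exact hknot3 1 hm
    · -- degree 2 : G t² is a constant, contradicts injectivity
      have e2 : G (mono 4 (1:K) 2) = mono 4 (α * (σ ^ 2) α * (σ ^ 0) bK) 0 := by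
        rw [hg2, petit_mono σ bK α α 2 2 (by norm_num) (by norm_num)]; norm_num
      have hGc : G (mono 4 (τ.symm (α * (σ ^ 2) α * (σ ^ 0) bK)) 0)
          = mono 4 (α * (σ ^ 2) α * (σ ^ 0) bK) 0 := by
        rw [hconst, RingEquiv.apply_symm_apply]
      have heq := hinjG (e2.trans hGc.symm)
      simpa [mono, finv2] using congrFun heq 2
    · -- degree 3
      have e2 : G (mono 4 (1:K) 2) = mono 4 (α * (σ ^ 3) α * (σ ^ 2) bK) 2 := by
        rw [hg2, petit_mono σ bK α α 3 3 (by norm_num) (by norm_num)]; norm_num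
      have e3 : G (mono 4 (1:K) 3)
          = mono 4 (α * (σ ^ 3) (α * (σ ^ 3) α * (σ ^ 2) bK) * (σ ^ 1) bK) 1 := by
        have h := hmul (mono 4 (1:K) 1) (mono 4 (1:K) 2)
        rw [ht3, hGt, e2, petit_mono σ bK α _ 3 2 (by norm_num) (by norm_num)] at h
        rw [h]; norm_num [ringaut_one_apply]
      have e4 : mono 4 (τ ξK) 0
          = mono 4 (α * (σ ^ 3) (α * (σ ^ 3) (α * (σ ^ 3) α * (σ ^ 2) bK) * (σ ^ 1) bK)
              * (σ ^ 0) bK) 0 := by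
        have h := hmul (mono 4 (1:K) 1) (mono 4 (1:K) 3)
        rw [ht4, hconst, hGt, e3, petit_mono σ bK α _ 3 1 (by norm_num) (by norm_num)] at h
        rw [h]; norm_num [ringaut_one_apply]
      have hcoef : τ ξK = α * (σ ^ 3) (α * (σ ^ 3) (α * (σ ^ 3) α * (σ ^ 2) bK)
          * (σ ^ 1) bK) * (σ ^ 0) bK := by
        simpa [mono, finv0] using congrFun e4 0
      have hbne : bK ≠ 0 := (ξ ^ k).ne_zero
      have hτ : τ ξK = (α ^ 8) ^ 2555 * ((bK ^ 8) ^ 830 * bK ^ 3) := by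
        rw [hcoef]; simp only [hsp]; ring
      rw [hq α hα, hq bK hbne, one_pow, one_pow, one_mul, one_mul] at hτ
      have hτ' : τ ξK = ξK ^ (3 * k) := by
        rw [hτ, hbKpow, ← pow_mul, mul_comm]
      rcases aut_dichotomy hK σ hσ ξ hord τ with hd | hd
      · have hm := hmod (3 * k) 1 (by rw [← hτ', hd, pow_one])
        refine hknot3 1 ?_
        have : 3 * k % 8 = 1 % 8 := hm
        show k % 8 = 3 ^ 1 % 8
        omega
      · have hm := hmod (3 * k) 3 (by rw [← hτ', hd])
        refine hknot3 0 ?_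
        have : 3 * k % 8 = 3 % 8 := hm
        show k % 8 = 3 ^ 0 % 8
        omega
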